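/- Let G be a finite, connected graph that is not balanced-bipartite, and let w ∈ Λ be a non-unstable equilibrium. Then for every initial point v^0 in the interior of Δ (all coordinates strictly positive), the solution v(t) of the ODE dv/dt = F(v) with v(0) = v^0 converges to w as t → ∞. -/

import Mathlib

/-!
The Lyapunov function `L = polyaL G` is concave on `Δ` and `F_i = v_i ∂_iL`, so `L` increases
along trajectories at rate `∑ v_i (∂_iL)²`. At an equilibrium `w`, `∂_iL(w) = 0` wherever
`w_i ≠ 0`, while where `w_i = 0` row `i` of `JF(w)` is `∂_iL(w) e_i`; non-instability thus forces
`∂_iL(w) ≤ 0` there, and the tangent inequality at `w` makes `w` a maximiser of `L` on `Δ`. It is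
the unique one: two maximisers have the same sum over every edge, and on a connected graph that is
not balanced-bipartite this determines the point. Along a trajectory, `∑ w_i log v_i ≤ 0` has
derivative `∑ w_i ∂_iL(v) ≥ L(w) - L(v)`, so `L(v(t))` cannot stay below `L(w) - δ`; hence
`L(v(t)) → L(w)`, and compactness of `Δ` gives `v(t) → w`.
-/

open MeasureTheory Filter Finset Topology

noncomputable section

namespace GPU

variable {m : ℕ}

/-- The vector field `F` of the ODE associated to the generalized Pólya urn,
`F_i(x) = -x_i + (1/N) ∑_{j ~ i} x_i/(x_i+x_j)` where `N` is the number of edges. -/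
def polyaF (G : SimpleGraph (Fin m)) [DecidableRel G.Adj] (x : Fin m → ℝ) : Fin m → ℝ :=
  fun i => -x i + (1 / (G.edgeFinset.card : ℝ)) * ∑ j ∈ G.neighborFinset i, x i / (x i + x j)

/-- The domain `Δ`. -/
def simplexDelta (G : SimpleGraph (Fin m)) (c : ℝ) : Set (Fin m → ℝ) :=
  {x | (∀ i, 0 ≤ x i) ∧ ∑ i, x i = 1 ∧ ∀ i j, G.Adj i j → c ≤ x i + x j}

/-- The equilibria set `Λ = {x ∈ Δ : F(x) = 0}`. -/
def equilibria (G : SimpleGraph (Fin m)) [DecidableRel G.Adj] (c : ℝ) : Set (Fin m → ℝ) :=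
  {x | x ∈ simplexDelta G c ∧ polyaF G x = 0}

/-- The Lyapunov function `L(v) = -∑ v_i + (1/N) ∑_{{i,j} ∈ E} log (v_i + v_j)`. -/
def polyaL (G : SimpleGraph (Fin m)) [DecidableRel G.Adj] (v : Fin m → ℝ) : ℝ :=
  -∑ i, v i + (1 / (G.edgeFinset.card : ℝ)) *
    ∑ e ∈ G.edgeFinset,
      Sym2.lift ⟨fun i j => Real.log (v i + v j), fun i j => by simp [add_comm]⟩ e

/-- The partial derivative `∂L/∂v_i = -1 + (1/N) ∑_{j ~ i} 1/(v_i+v_j)`. -/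
def partialL (G : SimpleGraph (Fin m)) [DecidableRel G.Adj] (v : Fin m → ℝ) (i : Fin m) : ℝ :=
  -1 + (1 / (G.edgeFinset.card : ℝ)) * ∑ j ∈ G.neighborFinset i, 1 / (v i + v j)

/-- The Jacobian matrix `JF(v)` of `F` at `v`. -/
def polyaJacobian (G : SimpleGraph (Fin m)) [DecidableRel G.Adj] (v : Fin m → ℝ) :
    Matrix (Fin m) (Fin m) ℝ :=
  Matrix.of fun i j => fderiv ℝ (fun x => polyaF G x i) v (Pi.single j 1)

/-- A point is unstable if its Jacobian matrix has an eigenvalue with strictly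
positive real part. -/
def Unstable (G : SimpleGraph (Fin m)) [DecidableRel G.Adj] (v : Fin m → ℝ) : Prop :=
  ∃ z : ℂ, z ∈ spectrum ℂ ((polyaJacobian G v).map Complex.ofReal) ∧ 0 < z.re

/-- `G` is balanced-bipartite if it admits a bipartition `V = A ∪ Aᶜ` with `#A = #Aᶜ`. -/
def BalancedBipartite (G : SimpleGraph (Fin m)) : Prop :=
  ∃ A : Finset (Fin m), (∀ i j, G.Adj i j → (i ∈ A ↔ j ∉ A)) ∧ A.card = Aᶜ.card

/-- The generalized Pólya urn process on `G`: at each step, for each edge `{i,j}` one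
ball is added either to bin `i` or to bin `j`; conditionally on the past the ball goes
to `i` with probability `B_i(n)/(B_i(n)+B_j(n))` and the choices for distinct edges are
conditionally independent (encoded by the product form of `condLaw`). -/
structure PolyaUrn (G : SimpleGraph (Fin m)) [DecidableRel G.Adj]
    (Ω : Type) [mΩ : MeasurableSpace Ω] (μ : Measure Ω) where
  /-- initial number of balls in each bin -/
  B₀ : Fin m → ℕ
  B₀_pos : ∀ i, 1 ≤ B₀ i
  /-- the filtration of the process -/
  ℱ : Filtration ℕ mΩ
  /-- `δ (n+1) i j` is the indicator that the ball added on edge `{i,j}` at step `n+1`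
  goes to bin `i` -/
  δ : ℕ → Fin m → Fin m → Ω → ℕ
  /-- number of balls in each bin after step `n` -/
  B : ℕ → Ω → Fin m → ℕ
  B_init : ∀ ω i, B 0 ω i = B₀ i
  B_step : ∀ n ω i, B (n + 1) ω i = B n ω i + ∑ j ∈ G.neighborFinset i, δ (n + 1) i j ω
  δ_sum : ∀ n i j ω, G.Adj i j → δ (n + 1) i j ω + δ (n + 1) j i ω = 1
  B_meas : ∀ n i, Measurable[ℱ n] fun ω => B n ω i
  δ_meas : ∀ n i j, Measurable[ℱ (n + 1)] fun ω => δ (n + 1) i j ω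
  condLaw : ∀ n (s : Fin m → Fin m → ℕ),
    (μ[Set.indicator {ω | ∀ i j, G.Adj i j → i < j → δ (n + 1) i j ω = s i j}
        (fun _ => (1 : ℝ)) | ℱ n])
      =ᵐ[μ] fun ω => ∏ i, ∏ j ∈ (G.neighborFinset i).filter (fun j => i < j),
        (if s i j = 1 then (B n ω i : ℝ) / ((B n ω i : ℝ) + (B n ω j : ℝ))
         else if s i j = 0 then (B n ω j : ℝ) / ((B n ω i : ℝ) + (B n ω j : ℝ)) else 0)

/-- The proportion of balls in each bin, `x_i(n) = B_i(n)/(N₀ + nN)`. -/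
def PolyaUrn.x {G : SimpleGraph (Fin m)} [DecidableRel G.Adj] {Ω : Type}
    [mΩ : MeasurableSpace Ω] {μ : Measure Ω} (U : PolyaUrn G Ω μ) (n : ℕ) (ω : Ω) :
    Fin m → ℝ :=
  fun i => (U.B n ω i : ℝ) / ((∑ j, U.B₀ j + n * G.edgeFinset.card : ℕ) : ℝ)

end GPU


namespace SimpleGraph

variable {V M : Type*} [Fintype V] [DecidableEq V] [AddCommMonoid M]
  (G : SimpleGraph V) [DecidableRel G.Adj]

theorem sum_sum_neighborFinset_eq_sum_edgeFinset (f : V → V → M) :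
    ∑ i, ∑ j ∈ G.neighborFinset i, f i j =
      ∑ e ∈ G.edgeFinset, Sym2.lift ⟨fun i j => f i j + f j i, fun _ _ => add_comm _ _⟩ e := by
  rw [Finset.sum_sigma', ← Finset.sum_fiberwise_of_maps_to
    (g := fun p : Σ _ : V, V => s(p.1, p.2)) (t := G.edgeFinset) (by simp)]
  refine Finset.sum_congr rfl fun e he => ?_
  induction e with
  | _ i j =>
    have hij : G.Adj i j := mem_edgeFinset.1 he
    have hfiber : {p ∈ univ.sigma fun i => G.neighborFinset i | s(p.1, p.2) = s(i, j)} =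
        ({⟨i, j⟩, ⟨j, i⟩} : Finset (Σ _ : V, V)) := by
      ext ⟨a, b⟩
      simp only [Finset.mem_filter, Finset.mem_sigma, Finset.mem_univ, true_and,
        mem_neighborFinset, Finset.mem_insert, Finset.mem_singleton, Sym2.eq_iff]
      constructor
      · rintro ⟨-, ⟨rfl, rfl⟩ | ⟨rfl, rfl⟩⟩ <;> simp
      · rintro (h | h) <;> cases h <;> simp [hij, hij.symm]
    rw [hfiber, Finset.sum_pair (by simp [hij.ne]), Sym2.lift_mk]

end SimpleGraph

theorem Matrix.mem_spectrum_of_row_eq_single {n R : Type*} [Fintype n] [DecidableEq n]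
    [CommRing R] [Nontrivial R] {A : Matrix n n R} {k : n} {r : R} (h : A k = Pi.single k r) :
    r ∈ spectrum R A := by
  rw [spectrum.mem_iff, Matrix.isUnit_iff_isUnit_det,
    Matrix.det_eq_zero_of_row_eq_zero k fun j => ?_]
  · exact not_isUnit_zero
  · rw [Matrix.sub_apply, h, Matrix.algebraMap_matrix_apply, Pi.single_apply]
    by_cases hj : j = k
    · simp [hj]
    · simp [hj, Ne.symm hj]

theorem monotoneOn_Ici_of_hasDerivAt {f f' : ℝ → ℝ} {a : ℝ}
    (hf : ∀ t, a ≤ t → HasDerivAt f (f' t) t) (hf' : ∀ t, a ≤ t → 0 ≤ f' t) :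
    MonotoneOn f (Set.Ici a) := by
  refine monotoneOn_of_hasDerivWithinAt_nonneg (f' := f') (convex_Ici a)
    (fun t ht => (hf t ht).continuousAt.continuousWithinAt) (fun t ht => ?_) (fun t ht => ?_)
  all_goals rw [interior_Ici] at ht
  · exact (hf t (le_of_lt ht)).hasDerivWithinAt
  · exact hf' t (le_of_lt ht)

theorem tendsto_atTop_of_monotoneOn_Ici {f : ℝ → ℝ} {a b : ℝ} (hf : MonotoneOn f (Set.Ici a))
    (hle : ∀ t, a ≤ t → f t ≤ b) (hlt : ∀ b' < b, ∃ t, a ≤ t ∧ b' < f t) :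
    Tendsto f atTop (𝓝 b) := by
  refine tendsto_order.2 ⟨fun b' hb' => ?_, fun b' hb' => ?_⟩
  · obtain ⟨t, hat, ht⟩ := hlt b' hb'
    exact eventually_atTop.2 ⟨t, fun s hs => ht.trans_le (hf hat (hat.trans hs) hs)⟩
  · exact eventually_atTop.2 ⟨a, fun s hs => (hle s hs).trans_lt hb'⟩

theorem tendsto_of_tendsto_comp_of_forall_lt {X ι : Type*} [TopologicalSpace X] {l : Filter ι}
    {K : Set X} (hK : IsCompact K) {f : X → ℝ} (hf : ContinuousOn f K) {w : X}
    (hw : ∀ x ∈ K, x ≠ w → f x < f w) {u : ι → X} (huK : ∀ᶠ i in l, u i ∈ K)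
    (hfu : Tendsto (fun i => f (u i)) l (𝓝 (f w))) : Tendsto u l (𝓝 w) := by
  rw [(nhds_basis_opens w).tendsto_right_iff]
  rintro U ⟨hwU, hU⟩
  rcases (K \ U).eq_empty_or_nonempty with hKU | hKU
  · filter_upwards [huK] with i hi
    by_contra hiU
    exact (Set.mem_empty_iff_false (u i)).1 (hKU ▸ ⟨hi, hiU⟩)
  obtain ⟨x₀, hx₀, hmax⟩ := (hK.diff hU).exists_isMaxOn hKU (hf.mono Set.sdiff_subset)
  have hx₀w : f x₀ < f w := hw x₀ hx₀.1 (ne_of_mem_of_not_mem hwU hx₀.2).symm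
  filter_upwards [huK, hfu.eventually (lt_mem_nhds hx₀w)] with i hiK hi
  by_contra hiU
  exact (hmax ⟨hiK, hiU⟩).not_gt hi

theorem log_sub_log_le_div {a b : ℝ} (ha : 0 < a) (hb : 0 < b) :
    Real.log b - Real.log a ≤ (b - a) / a := by
  rw [← Real.log_div hb.ne' ha.ne', sub_div, div_self ha.ne']
  exact Real.log_le_sub_one_of_pos (div_pos hb ha)

theorem log_sub_log_lt_div {a b : ℝ} (ha : 0 < a) (hb : 0 < b) (hab : a ≠ b) :
    Real.log b - Real.log a < (b - a) / a := by
  rw [← Real.log_div hb.ne' ha.ne', sub_div, div_self ha.ne']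
  exact Real.log_lt_sub_one_of_pos (div_pos hb ha) fun h =>
    hab ((div_eq_one_iff_eq ha.ne').1 h).symm

namespace GPU

section Simplex

variable {m : ℕ} {G : SimpleGraph (Fin m)} {c : ℝ} {x : Fin m → ℝ}

theorem add_pos_of_mem_simplexDelta (hc : 0 < c) (hx : x ∈ simplexDelta G c) {i j : Fin m}
    (h : G.Adj i j) : 0 < x i + x j :=
  hc.trans_le (hx.2.2 i j h)

theorem le_one_of_mem_simplexDelta (hx : x ∈ simplexDelta G c) (i : Fin m) : x i ≤ 1 :=
  hx.2.1 ▸ Finset.single_le_sum (fun j _ => hx.1 j) (Finset.mem_univ i)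

theorem simplexDelta_subset_Icc : simplexDelta G c ⊆ Set.Icc 0 1 :=
  fun _ hx => ⟨hx.1, le_one_of_mem_simplexDelta hx⟩

variable (G c) in
theorem isCompact_simplexDelta : IsCompact (simplexDelta G c) := by
  refine isCompact_Icc.of_isClosed_subset ?_ simplexDelta_subset_Icc
  simp only [simplexDelta, Set.ofPred_and, Set.ofPred_forall]
  exact (isClosed_iInter fun i => isClosed_le continuous_const (continuous_apply i)).inter
    ((isClosed_eq (by fun_prop) continuous_const).inter
      (isClosed_iInter fun i => isClosed_iInter fun j => isClosed_iInter fun _ =>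
        isClosed_le continuous_const (by fun_prop)))

end Simplex

/-- The defect in the tangent-line bound for `log` at the edge sums of `x` and `y`. -/
def logGap {m : ℕ} (x y : Fin m → ℝ) : Sym2 (Fin m) → ℝ :=
  Sym2.lift ⟨fun i j => ((y i + y j) - (x i + x j)) / (x i + x j) -
    (Real.log (y i + y j) - Real.log (x i + x j)), fun i j => by simp only [add_comm]⟩

theorem logGap_pos {m : ℕ} {G : SimpleGraph (Fin m)} {c : ℝ} (hc : 0 < c) {x y : Fin m → ℝ}
    (hx : x ∈ simplexDelta G c) (hy : y ∈ simplexDelta G c) {i j : Fin m} (hij : G.Adj i j)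
    (hne : x i + x j ≠ y i + y j) :
    0 < logGap x y s(i, j) :=
  sub_pos.2 (log_sub_log_lt_div (add_pos_of_mem_simplexDelta hc hx hij)
    (add_pos_of_mem_simplexDelta hc hy hij) hne)

theorem eq_zero_of_forall_adj_add_eq_zero {m : ℕ} {G : SimpleGraph (Fin m)}
    (hconn : G.Connected) (hnbb : ¬ BalancedBipartite G) {u : Fin m → ℝ}
    (hsum : ∑ i, u i = 0) (hadj : ∀ i j, G.Adj i j → u i + u j = 0) : u = 0 := by
  obtain ⟨i₀⟩ := hconn.nonempty
  have hwalk : ∀ {i j : Fin m}, G.Walk i j → |u i| = |u j| := by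
    intro i j p
    induction p with
    | nil => rfl
    | cons h _ ih => rw [← ih, eq_neg_of_add_eq_zero_right (hadj _ _ h), abs_neg]
  have hval : ∀ i, u i = u i₀ ∨ u i = -u i₀ := fun i =>
    abs_eq_abs.1 (hwalk (hconn.preconnected i i₀).some)
  by_cases h₀ : u i₀ = 0
  · funext i
    rcases hval i with h | h <;> simp [h, h₀]
  set A : Finset (Fin m) := {i | u i = u i₀}
  have hA : ∑ i ∈ A, u i = #A * u i₀ := by
    rw [Finset.sum_congr rfl fun i hi => (Finset.mem_filter.1 hi).2, Finset.sum_const,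
      nsmul_eq_mul]
  have hAc : ∑ i ∈ Aᶜ, u i = #Aᶜ * -u i₀ := by
    rw [Finset.sum_congr rfl fun i hi => (hval i).resolve_left (by simpa [A] using hi),
      Finset.sum_const, nsmul_eq_mul]
  refine absurd ⟨A, fun i j hij => ?_, ?_⟩ hnbb
  · have := hadj i j hij
    simp only [A, Finset.mem_filter, Finset.mem_univ, true_and]
    rcases hval i with hi | hi <;> rcases hval j with hj | hj <;> grind
  · have := Finset.sum_add_sum_compl A u
    rw [hA, hAc, hsum] at this
    exact_mod_cast mul_right_cancel₀ h₀ (by linarith : (#A : ℝ) * u i₀ = #Aᶜ * u i₀)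

section Lyapunov

variable {m : ℕ} {G : SimpleGraph (Fin m)} [DecidableRel G.Adj] {c : ℝ}

theorem polyaF_eq_mul_partialL (x : Fin m → ℝ) (i : Fin m) :
    polyaF G x i = x i * partialL G x i := by
  simp only [polyaF, partialL, div_eq_mul_one_div (x i), ← Finset.mul_sum]
  ring

theorem add_polyaF_nonneg {x : Fin m → ℝ} (hx : ∀ j, 0 ≤ x j) (i : Fin m) :
    0 ≤ x i + polyaF G x i := by
  rw [polyaF, add_neg_cancel_left]
  exact mul_nonneg (by positivity)
    (Finset.sum_nonneg fun j _ => div_nonneg (hx i) (add_nonneg (hx i) (hx j)))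

theorem partialL_eq_zero_of_ne_zero {w : Fin m → ℝ} (hw : polyaF G w = 0) {i : Fin m}
    (hwi : w i ≠ 0) : partialL G w i = 0 :=
  (mul_eq_zero.1 ((polyaF_eq_mul_partialL w i).symm.trans (congrFun hw i))).resolve_left hwi

theorem sum_mul_partialL (x d : Fin m → ℝ) :
    ∑ i, d i * partialL G x i = -∑ i, d i + (1 / (#G.edgeFinset : ℝ)) *
      ∑ e ∈ G.edgeFinset,
        Sym2.lift ⟨fun i j => (d i + d j) / (x i + x j), fun i j => by simp [add_comm]⟩ e := by
  have hedges := G.sum_sum_neighborFinset_eq_sum_edgeFinset fun i j => d i / (x i + x j)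
  have hlift : ∀ e : Sym2 (Fin m),
      Sym2.lift ⟨fun i j => d i / (x i + x j) + d j / (x j + x i), fun _ _ => add_comm _ _⟩ e =
        Sym2.lift ⟨fun i j => (d i + d j) / (x i + x j), fun i j => by simp [add_comm]⟩ e := by
    intro e
    induction e with
    | _ i j => simp only [Sym2.lift_mk, add_comm (x j), add_div]
  have hterm : ∀ i, d i * partialL G x i =
      -d i + 1 / (#G.edgeFinset : ℝ) * ∑ j ∈ G.neighborFinset i, d i / (x i + x j) := by
    intro i
    simp only [partialL, div_eq_mul_one_div (d i), ← Finset.mul_sum]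
    ring
  simp only [hlift] at hedges
  rw [Finset.sum_congr rfl fun i _ => hterm i, Finset.sum_add_distrib, ← Finset.mul_sum, hedges,
    Finset.sum_neg_distrib]

theorem sum_mul_partialL_self (hN : 0 < #G.edgeFinset) (hc : 0 < c) {x : Fin m → ℝ}
    (hx : x ∈ simplexDelta G c) : ∑ i, x i * partialL G x i = 0 := by
  have hedge : ∀ e ∈ G.edgeFinset,
      Sym2.lift ⟨fun i j => (x i + x j) / (x i + x j), fun i j => by simp [add_comm]⟩ e = 1 := by
    intro e he
    induction e with
    | _ i j =>
      exact div_self (add_pos_of_mem_simplexDelta hc hx (SimpleGraph.mem_edgeFinset.1 he)).ne'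
  rw [sum_mul_partialL, hx.2.1, Finset.sum_congr rfl hedge, Finset.sum_const, nsmul_one,
    one_div_mul_cancel (by positivity)]
  ring

theorem logGap_nonneg (hc : 0 < c) {x y : Fin m → ℝ} (hx : x ∈ simplexDelta G c)
    (hy : y ∈ simplexDelta G c) {e : Sym2 (Fin m)} (he : e ∈ G.edgeFinset) : 0 ≤ logGap x y e := by
  induction e with
  | _ i j =>
    have hij : G.Adj i j := SimpleGraph.mem_edgeFinset.1 he
    exact sub_nonneg.2 (log_sub_log_le_div (add_pos_of_mem_simplexDelta hc hx hij)
      (add_pos_of_mem_simplexDelta hc hy hij))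

theorem polyaL_add_sum_mul_partialL_sub (x y : Fin m → ℝ) :
    polyaL G x + ∑ i, (y i - x i) * partialL G x i - polyaL G y =
      1 / (#G.edgeFinset : ℝ) * ∑ e ∈ G.edgeFinset, logGap x y e := by
  have hgap : ∀ e : Sym2 (Fin m), logGap x y e =
      Sym2.lift ⟨fun i j => ((y i - x i) + (y j - x j)) / (x i + x j),
        fun i j => by simp [add_comm]⟩ e -
      (Sym2.lift ⟨fun i j => Real.log (y i + y j), fun i j => by simp [add_comm]⟩ e -
        Sym2.lift ⟨fun i j => Real.log (x i + x j), fun i j => by simp [add_comm]⟩ e) := by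
    intro e
    induction e with
    | _ i j => simp only [logGap, Sym2.lift_mk]; ring
  simp only [hgap, Finset.sum_sub_distrib, polyaL, sum_mul_partialL]
  ring

theorem polyaL_le_add_sum_mul_partialL (hc : 0 < c) {x y : Fin m → ℝ}
    (hx : x ∈ simplexDelta G c) (hy : y ∈ simplexDelta G c) :
    polyaL G y ≤ polyaL G x + ∑ i, (y i - x i) * partialL G x i := by
  rw [← sub_nonneg, polyaL_add_sum_mul_partialL_sub]
  exact mul_nonneg (by positivity) (Finset.sum_nonneg fun e he => logGap_nonneg hc hx hy he)

theorem polyaL_lt_add_sum_mul_partialL (hc : 0 < c) {x y : Fin m → ℝ}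
    (hx : x ∈ simplexDelta G c) (hy : y ∈ simplexDelta G c) {i j : Fin m} (hij : G.Adj i j)
    (hne : x i + x j ≠ y i + y j) :
    polyaL G y < polyaL G x + ∑ i, (y i - x i) * partialL G x i := by
  have he : s(i, j) ∈ G.edgeFinset := SimpleGraph.mem_edgeFinset.2 hij
  rw [← sub_pos, polyaL_add_sum_mul_partialL_sub]
  exact mul_pos (one_div_pos.2 (Nat.cast_pos.2 (Finset.card_pos.2 ⟨_, he⟩)))
    (Finset.sum_pos' (fun e he => logGap_nonneg hc hx hy he) ⟨_, he, logGap_pos hc hx hy hij hne⟩)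

theorem polyaL_sub_le_sum_mul_partialL (hN : 0 < #G.edgeFinset) (hc : 0 < c)
    {x y : Fin m → ℝ} (hx : x ∈ simplexDelta G c) (hy : y ∈ simplexDelta G c) :
    polyaL G y - polyaL G x ≤ ∑ i, y i * partialL G x i := by
  have h := polyaL_le_add_sum_mul_partialL hc hx hy
  simp only [sub_mul, Finset.sum_sub_distrib, sum_mul_partialL_self hN hc hx] at h
  linarith

theorem hasFDerivAt_polyaF_apply_of_eq_zero {w : Fin m → ℝ} {k : Fin m} (hk : w k = 0)
    (hne : ∀ j ∈ G.neighborFinset k, w k + w j ≠ 0) :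
    HasFDerivAt (fun x => polyaF G x k)
      (partialL G w k • ContinuousLinearMap.proj (R := ℝ) (φ := fun _ : Fin m => ℝ) k) w := by
  have hdiff : DifferentiableAt ℝ (fun x => partialL G x k) w := by
    refine (DifferentiableAt.const_mul (DifferentiableAt.fun_sum fun j hj => ?_) _).const_add _
    have hpair : DifferentiableAt ℝ (fun x : Fin m → ℝ => x k + x j) w := by fun_prop
    simpa only [one_div] using hpair.fun_inv (hne j hj)
  have h := (hasFDerivAt_apply (𝕜 := ℝ) (F' := fun _ => ℝ) k w).fun_mul hdiff.hasFDerivAt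
  simp only [hk, zero_smul, zero_add] at h
  simpa only [polyaF_eq_mul_partialL] using h

theorem unstable_of_partialL_pos (hc : 0 < c) {w : Fin m → ℝ} (hw : w ∈ simplexDelta G c)
    {k : Fin m} (hk : w k = 0) (hpos : 0 < partialL G w k) : Unstable G w := by
  have hder := hasFDerivAt_polyaF_apply_of_eq_zero (G := G) hk fun j hj =>
    (add_pos_of_mem_simplexDelta hc hw ((G.mem_neighborFinset k j).1 hj)).ne'
  refine ⟨partialL G w k, Matrix.mem_spectrum_of_row_eq_single (k := k) ?_, by simpa using hpos⟩
  funext j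
  simp only [Matrix.map_apply, polyaJacobian, Matrix.of_apply, hder.fderiv,
    smul_apply, ContinuousLinearMap.proj_apply, smul_eq_mul, Pi.single_apply]
  by_cases hj : j = k
  · simp [hj]
  · simp [hj, Ne.symm hj]

theorem sum_sub_mul_partialL_nonpos (hc : 0 < c) {w : Fin m → ℝ} (hw : w ∈ equilibria G c)
    (hwu : ¬ Unstable G w) {x : Fin m → ℝ} (hx : ∀ i, 0 ≤ x i) :
    ∑ i, (x i - w i) * partialL G w i ≤ 0 := by
  refine Finset.sum_nonpos fun i _ => ?_
  by_cases hwi : w i = 0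
  · have hle : partialL G w i ≤ 0 :=
      not_lt.1 fun hpos => hwu (unstable_of_partialL_pos hc hw.1 hwi hpos)
    rw [hwi, sub_zero]
    exact mul_nonpos_of_nonneg_of_nonpos (hx i) hle
  · rw [partialL_eq_zero_of_ne_zero hw.2 hwi, mul_zero]

theorem polyaL_lt_of_ne (hconn : G.Connected) (hnbb : ¬ BalancedBipartite G) (hc : 0 < c)
    {w : Fin m → ℝ} (hw : w ∈ equilibria G c) (hwu : ¬ Unstable G w) {x : Fin m → ℝ}
    (hx : x ∈ simplexDelta G c) (hxw : x ≠ w) : polyaL G x < polyaL G w := by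
  obtain ⟨i, j, hij, hne⟩ : ∃ i j, G.Adj i j ∧ w i + w j ≠ x i + x j := by
    by_contra! h
    refine hxw (sub_eq_zero.1 (eq_zero_of_forall_adj_add_eq_zero hconn hnbb (u := x - w) ?_ ?_))
    · simp [Finset.sum_sub_distrib, hx.2.1, hw.1.2.1]
    · intro i j hij
      simp only [Pi.sub_apply]
      linarith [h i j hij]
  linarith [polyaL_lt_add_sum_mul_partialL hc hw.1 hx hij hne,
    sum_sub_mul_partialL_nonpos hc hw hwu hx.1]

theorem continuousOn_polyaL (hc : 0 < c) : ContinuousOn (polyaL G) (simplexDelta G c) := by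
  refine (continuous_finsetSum _ fun i _ => continuous_apply i).neg.continuousOn.add
    (continuousOn_const.mul (continuousOn_finsetSum _ fun e he => ?_))
  induction e with
  | _ i j =>
    exact (((continuous_apply i).add (continuous_apply j)).continuousOn).log fun x hx =>
      (add_pos_of_mem_simplexDelta hc hx (SimpleGraph.mem_edgeFinset.1 he)).ne'

end Lyapunov

section Trajectory

variable {m : ℕ} {G : SimpleGraph (Fin m)} [DecidableRel G.Adj] {c : ℝ}

theorem hasDerivAt_polyaL_comp {γ : ℝ → Fin m → ℝ} {γ' : Fin m → ℝ} {t : ℝ}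
    (hγ : HasDerivAt γ γ' t) (hne : ∀ i j, G.Adj i j → γ t i + γ t j ≠ 0) :
    HasDerivAt (fun s => polyaL G (γ s)) (∑ i, γ' i * partialL G (γ t) i) t := by
  have hcoord : ∀ i, HasDerivAt (fun s => γ s i) (γ' i) t := fun i => hasDerivAt_pi.1 hγ i
  rw [sum_mul_partialL]
  refine (HasDerivAt.fun_sum fun i _ => hcoord i).neg.add
    (HasDerivAt.const_mul _ (HasDerivAt.fun_sum fun e he => ?_))
  induction e with
  | _ i j => exact ((hcoord i).add (hcoord j)).log (hne i j (SimpleGraph.mem_edgeFinset.1 he))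

theorem hasDerivAt_sum_mul_log_comp (w : Fin m → ℝ) {γ : ℝ → Fin m → ℝ} {t : ℝ}
    (hγ : HasDerivAt γ (polyaF G (γ t)) t) (hpos : ∀ i, 0 < γ t i) :
    HasDerivAt (fun s => ∑ i, w i * Real.log (γ s i)) (∑ i, w i * partialL G (γ t) i) t := by
  refine HasDerivAt.fun_sum fun i _ => ?_
  have h := ((hasDerivAt_pi.1 hγ i).log (hpos i).ne').const_mul (w i)
  rwa [polyaF_eq_mul_partialL, mul_div_cancel_left₀ _ (hpos i).ne'] at h

variable {v : ℝ → Fin m → ℝ} (hv : ∀ t, 0 ≤ t → HasDerivAt v (polyaF G (v t)) t)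
include hv

theorem pos_of_hasDerivAt_polyaF {i : Fin m} (hv0 : 0 < v 0 i)
    (hnonneg : ∀ t, 0 ≤ t → ∀ j, 0 ≤ v t j) {t : ℝ} (ht : 0 ≤ t) : 0 < v t i := by
  have hmono : MonotoneOn (fun s => Real.exp s * v s i) (Set.Ici 0) :=
    monotoneOn_Ici_of_hasDerivAt
      (fun s hs => (Real.hasDerivAt_exp s).mul (hasDerivAt_pi.1 (hv s hs) i))
      (fun s hs => by
        rw [← mul_add]
        exact mul_nonneg (Real.exp_pos s).le (add_polyaF_nonneg (hnonneg s hs) i))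
  have h := hmono Set.self_mem_Ici ht ht
  simp only [Real.exp_zero, one_mul] at h
  exact pos_of_mul_pos_right (hv0.trans_le h) (Real.exp_pos t).le

variable (hv_mem : ∀ t, 0 ≤ t → v t ∈ simplexDelta G c)
include hv_mem

theorem monotoneOn_polyaL_comp (hc : 0 < c) : MonotoneOn (fun t => polyaL G (v t)) (Set.Ici 0) :=
  monotoneOn_Ici_of_hasDerivAt
    (fun t ht => hasDerivAt_polyaL_comp (hv t ht) fun i j hij =>
      (add_pos_of_mem_simplexDelta hc (hv_mem t ht) hij).ne')
    (fun t ht => Finset.sum_nonneg fun i _ => by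
      rw [polyaF_eq_mul_partialL, mul_assoc]
      exact mul_nonneg ((hv_mem t ht).1 i) (mul_self_nonneg _))

theorem exists_lt_polyaL_comp (hN : 0 < #G.edgeFinset) (hc : 0 < c) {w : Fin m → ℝ}
    (hw : w ∈ simplexDelta G c) (hpos : ∀ t, 0 ≤ t → ∀ i, 0 < v t i) {b : ℝ}
    (hb : b < polyaL G w) : ∃ t, 0 ≤ t ∧ b < polyaL G (v t) := by
  by_contra! hle
  set δ := polyaL G w - b
  set V := fun t => ∑ i, w i * Real.log (v t i)
  have hV_nonpos : ∀ t, 0 ≤ t → V t ≤ 0 := fun t ht =>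
    Finset.sum_nonpos fun i _ => mul_nonpos_of_nonneg_of_nonpos (hw.1 i)
      (Real.log_nonpos (hpos t ht i).le (le_one_of_mem_simplexDelta (hv_mem t ht) i))
  have hmono : MonotoneOn (fun t => V t - δ * t) (Set.Ici 0) := by
    refine monotoneOn_Ici_of_hasDerivAt (f' := fun t => ∑ i, w i * partialL G (v t) i - δ)
      (fun t ht => ?_) (fun t ht => ?_)
    · exact (hasDerivAt_sum_mul_log_comp w (hv t ht) (hpos t ht)).fun_sub
        (((hasDerivAt_id' t).const_mul δ).congr_deriv (mul_one δ))
    · linarith [polyaL_sub_le_sum_mul_partialL hN hc (hv_mem t ht) hw, hle t ht]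
  have hT : 0 ≤ (1 - V 0) / δ := div_nonneg (by linarith [hV_nonpos 0 le_rfl]) (by linarith)
  have h := hmono Set.self_mem_Ici hT hT
  simp only [mul_zero, sub_zero, mul_div_cancel₀ _ (by linarith : δ ≠ 0)] at h
  linarith [hV_nonpos _ hT]

end Trajectory

/-- If `G` is finite, connected and not balanced-bipartite and
`w ∈ Λ` is a non-unstable equilibrium, then every solution of `dv/dt = F(v)` in `Δ`
starting at a point with all coordinates strictly positive converges to `w`. -/
theorem ode_converges_to_non_unstable_equilibrium
    (m : ℕ) (G : SimpleGraph (Fin m)) [DecidableRel G.Adj]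
    (hconn : G.Connected) (hnbb : ¬ BalancedBipartite G)
    (c : ℝ) (hc0 : 0 < c) (hc1 : c < 1 / (G.edgeFinset.card : ℝ))
    (w : Fin m → ℝ) (hw : w ∈ equilibria G c) (hwu : ¬ Unstable G w)
    (v : ℝ → Fin m → ℝ) (hv0 : ∀ i, 0 < v 0 i)
    (hv_mem : ∀ t : ℝ, 0 ≤ t → v t ∈ simplexDelta G c)
    (hv_ode : ∀ t : ℝ, 0 ≤ t → HasDerivAt v (polyaF G (v t)) t) :
    Tendsto v atTop (𝓝 w) := by
  have hN : 0 < #G.edgeFinset := Nat.pos_of_ne_zero fun h => by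
    rw [h, Nat.cast_zero, div_zero] at hc1
    exact hc1.not_gt hc0
  have hlt : ∀ x ∈ simplexDelta G c, x ≠ w → polyaL G x < polyaL G w :=
    fun x hx hxw => polyaL_lt_of_ne hconn hnbb hc0 hw hwu hx hxw
  have hv_pos : ∀ t, 0 ≤ t → ∀ i, 0 < v t i := fun t ht i =>
    pos_of_hasDerivAt_polyaF hv_ode (hv0 i) (fun s hs => (hv_mem s hs).1) ht
  refine tendsto_of_tendsto_comp_of_forall_lt (isCompact_simplexDelta G c)
    (continuousOn_polyaL hc0) hlt (eventually_atTop.2 ⟨0, hv_mem⟩) ?_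
  refine tendsto_atTop_of_monotoneOn_Ici (monotoneOn_polyaL_comp hv_ode hv_mem hc0)
    (fun t ht => ?_) fun b hb => exists_lt_polyaL_comp hv_ode hv_mem hN hc0 hw.1 hv_pos hb
  rcases eq_or_ne (v t) w with h | h
  exacts [(congrArg (polyaL G) h).le, (hlt _ (hv_mem t ht) h).le]

end GPU
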